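/- arXiv:2309.00539 — 2 statements merged into one kernel-verified Lean document; each statement's English description precedes it below -/
import Mathlib

section
/- The improper integral of z² · ln(1+e^z)/(1+e^z) over the whole real line equals 7·ζ(4), i.e. ∫_{-∞}^{+∞} z² ln(1+eᶻ)/(1+eᶻ) dz = 7π⁴/90. -/
/-!
Writing `f` for the integrand, `log (1 + eˣ) = x + log (1 + e⁻ˣ)` gives, for `x > 0` and
`q = e⁻ˣ`, `f x + f (-x) = x² log (1 + q) + x³ q / (1 + q)`. Expanding both terms in powers of
`q` and integrating term by term with `∫₀^∞ xᵏ e^{-cx} dx = k! / c^{k+1}` turns `∫ f` into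
`∑ (-1)ⁿ 8 / (n + 1)⁴ = 8 η(4) = 7 ζ(4)`.
-/

open Real MeasureTheory Set

open Nat in
theorem integral_pow_mul_exp_neg_mul_Ioi (n : ℕ) {c : ℝ} (hc : 0 < c) :
    ∫ x in Ioi 0, x ^ n * exp (-(c * x)) = n ! / c ^ (n + 1) := by
  have h := integral_rpow_mul_exp_neg_mul_Ioi (a := n + 1) (by positivity) hc
  rw [add_sub_cancel_right, Gamma_nat_eq_factorial, ← Nat.cast_add_one, rpow_natCast] at h
  rw [← one_div_mul_eq_div, ← one_div_pow, ← h]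
  refine setIntegral_congr_fun measurableSet_Ioi fun x _ => ?_
  rw [rpow_natCast]

theorem integrableOn_pow_mul_exp_neg_mul_Ioi (n : ℕ) {c : ℝ} (hc : 0 < c) :
    IntegrableOn (fun x => x ^ n * exp (-(c * x))) (Ioi 0) :=
  Integrable.of_integral_ne_zero <| by
    rw [integral_pow_mul_exp_neg_mul_Ioi n hc]
    positivity

theorem integral_sq_div_add_cube_mul_exp_neg_mul {c : ℝ} (hc : 0 < c) :
    ∫ x in Ioi 0, (x ^ 2 / c + x ^ 3) * exp (-(c * x)) = 8 / c ^ 4 := by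
  have e (x : ℝ) : (x ^ 2 / c + x ^ 3) * exp (-(c * x)) =
      c⁻¹ * (x ^ 2 * exp (-(c * x))) + x ^ 3 * exp (-(c * x)) := by ring
  simp only [e]
  rw [integral_add ((integrableOn_pow_mul_exp_neg_mul_Ioi 2 hc).const_mul _)
      (integrableOn_pow_mul_exp_neg_mul_Ioi 3 hc), integral_const_mul,
    integral_pow_mul_exp_neg_mul_Ioi 2 hc, integral_pow_mul_exp_neg_mul_Ioi 3 hc]
  norm_num [Nat.factorial]
  field_simp
  ring

theorem integrableOn_sq_div_add_cube_mul_exp_neg_mul {c : ℝ} (hc : 0 < c) :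
    IntegrableOn (fun x => (x ^ 2 / c + x ^ 3) * exp (-(c * x))) (Ioi 0) :=
  Integrable.of_integral_ne_zero <| by
    rw [integral_sq_div_add_cube_mul_exp_neg_mul hc]
    positivity

theorem integral_eq_integral_Ioi_add_comp_neg {E : Type*} [NormedAddCommGroup E]
    [NormedSpace ℝ E] {f : ℝ → E} (hf : Integrable f) :
    ∫ x, f x = ∫ x in Ioi 0, (f x + f (-x)) := by
  rw [integral_add hf.integrableOn hf.comp_neg.integrableOn, integral_comp_neg_Ioi, neg_zero,
    add_comm, intervalIntegral.integral_Iic_add_Ioi hf.integrableOn hf.integrableOn]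

theorem integrableOn_Iic_of_integrableOn_Ioi_comp_neg {E : Type*} [NormedAddCommGroup E]
    {f : ℝ → E} (hf : IntegrableOn (fun x => f (-x)) (Ioi 0)) : IntegrableOn f (Iic 0) := by
  have hneg : MeasurableEmbedding fun x : ℝ => -x := (Homeomorph.neg ℝ).measurableEmbedding
  rw [IntegrableOn, ← Measure.map_neg_eq_self (volume : Measure ℝ), ← IntegrableOn,
    hneg.integrableOn_map_iff]
  simpa [Function.comp_def] using (integrableOn_Ici_iff_integrableOn_Ioi).mpr hf

theorem integrable_of_nonneg_of_integrableOn_Ioi_add_comp_neg {f : ℝ → ℝ} (hf : Continuous f)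
    (h0 : ∀ x, 0 ≤ f x) (h : IntegrableOn (fun x => f x + f (-x)) (Ioi 0)) : Integrable f := by
  have hpos : IntegrableOn f (Ioi 0) :=
    h.mono' hf.aestronglyMeasurable.restrict <| .of_forall fun x => by
      rw [norm_of_nonneg (h0 x)]; linarith [h0 (-x)]
  have hneg : IntegrableOn (fun x => f (-x)) (Ioi 0) :=
    h.mono' (hf.comp continuous_neg).aestronglyMeasurable.restrict <| .of_forall fun x => by
      rw [norm_of_nonneg (h0 (-x))]; linarith [h0 x]
  simpa using (integrableOn_Iic_of_integrableOn_Ioi_comp_neg hneg).union hpos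

theorem hasSum_log_one_add_of_abs_lt_one {q : ℝ} (hq : |q| < 1) :
    HasSum (fun n : ℕ => (-1) ^ n * q ^ (n + 1) / (n + 1)) (log (1 + q)) := by
  have h := (hasSum_pow_div_log_of_abs_lt_one (x := -q) (by rwa [abs_neg])).neg
  have e (n : ℕ) : -((-q) ^ (n + 1) / (n + 1)) = (-1) ^ n * q ^ (n + 1) / (n + 1) := by
    rw [neg_pow, pow_succ (-1 : ℝ)]
    ring
  simpa only [e, neg_neg, sub_neg_eq_add] using h

theorem hasSum_div_one_add_of_abs_lt_one {q : ℝ} (hq : |q| < 1) :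
    HasSum (fun n : ℕ => (-1) ^ n * q ^ (n + 1)) (q / (1 + q)) := by
  have h := (hasSum_geometric_of_abs_lt_one (r := -q) (by rwa [abs_neg])).mul_left q
  have e (n : ℕ) : q * (-q) ^ n = (-1) ^ n * q ^ (n + 1) := by
    rw [neg_pow]
    ring
  simpa only [e, sub_neg_eq_add, ← div_eq_mul_inv] using h

theorem hasSum_one_div_succ_pow_four :
    HasSum (fun n : ℕ => 1 / ((n : ℝ) + 1) ^ 4) (π ^ 4 / 90) := by
  have h := (hasSum_nat_add_iff (f := fun n : ℕ => 1 / (n : ℝ) ^ 4) 1).mpr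
    (by simpa using hasSum_zeta_four)
  simpa only [Nat.cast_add, Nat.cast_one] using h

theorem hasSum_neg_one_pow_div_succ_pow {p : ℕ} {s : ℝ}
    (h : HasSum (fun n : ℕ => 1 / ((n : ℝ) + 1) ^ p) s) :
    HasSum (fun n : ℕ => (-1) ^ n / ((n : ℝ) + 1) ^ p) ((1 - 2 / 2 ^ p) * s) := by
  set a : ℕ → ℝ := fun n => 1 / ((n : ℝ) + 1) ^ p with ha
  have hodd : HasSum (fun k => a (2 * k + 1)) (s / 2 ^ p) := by
    have e (k : ℕ) : a (2 * k + 1) = a k / 2 ^ p := by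
      simp only [ha]
      rw [div_div, ← mul_pow]
      push_cast
      ring_nf
    rw [funext e]
    exact h.div_const _
  have heven : HasSum (fun k => a (2 * k)) (s - s / 2 ^ p) := by
    have he := (h.summable.comp_injective (mul_right_injective₀ (two_ne_zero' ℕ))).hasSum
    have hs := h.unique (he.even_add_odd hodd)
    rwa [show s - s / 2 ^ p = ∑' k, (a ∘ (2 * ·)) k by linarith]
  have e_even : (fun k : ℕ => (-1 : ℝ) ^ (2 * k) / (((2 * k : ℕ) : ℝ) + 1) ^ p) =
      fun k => a (2 * k) := by
    ext k
    rw [pow_mul, neg_one_sq, one_pow]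
  have e_odd : (fun k : ℕ => (-1 : ℝ) ^ (2 * k + 1) / (((2 * k + 1 : ℕ) : ℝ) + 1) ^ p) =
      fun k => -a (2 * k + 1) := by
    ext k
    rw [pow_succ, pow_mul, neg_one_sq, one_pow, one_mul, neg_div]
  rw [show (1 - 2 / 2 ^ p) * s = (s - s / 2 ^ p) + -(s / 2 ^ p) by ring]
  have hodd' := hodd.neg
  rw [← e_even] at heven
  rw [← e_odd] at hodd'
  exact heven.even_add_odd hodd'

noncomputable def zetaFourIntegrand (z : ℝ) : ℝ := z ^ 2 * log (1 + exp z) / (1 + exp z)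

theorem zetaFourIntegrand_nonneg (z : ℝ) : 0 ≤ zetaFourIntegrand z := by
  have : 0 ≤ log (1 + exp z) := log_nonneg (by linarith [exp_pos z])
  unfold zetaFourIntegrand
  positivity

theorem continuous_zetaFourIntegrand : Continuous zetaFourIntegrand := by
  have hpos : ∀ z, 1 + exp z ≠ 0 := fun z => by positivity
  unfold zetaFourIntegrand
  fun_prop (disch := exact hpos _)

theorem log_one_add_exp (z : ℝ) : log (1 + exp z) = z + log (1 + exp (-z)) := by
  rw [← log_exp z, ← log_mul (exp_ne_zero z) (by positivity), log_exp, mul_add, mul_one,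
    ← exp_add, add_neg_cancel, exp_zero, add_comm]

theorem zetaFourIntegrand_add_neg (x : ℝ) :
    zetaFourIntegrand x + zetaFourIntegrand (-x) =
      x ^ 2 * log (1 + exp (-x)) + x ^ 3 * (exp (-x) / (1 + exp (-x))) := by
  have h : 1 + exp x = exp x * (1 + exp (-x)) := by
    rw [mul_add, mul_one, ← exp_add, add_neg_cancel, exp_zero, add_comm]
  have hx : exp x ≠ 0 := exp_ne_zero x
  have hq : 1 + exp (-x) ≠ 0 := by positivity
  unfold zetaFourIntegrand
  rw [log_one_add_exp x, h, exp_neg]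
  field_simp
  ring

theorem integrableOn_zetaFourIntegrand_add_neg :
    IntegrableOn (fun x => zetaFourIntegrand x + zetaFourIntegrand (-x)) (Ioi 0) := by
  have hbound := (integrableOn_pow_mul_exp_neg_mul_Ioi 2 one_pos).add
    (integrableOn_pow_mul_exp_neg_mul_Ioi 3 one_pos)
  refine hbound.mono' (continuous_zetaFourIntegrand.add
    (continuous_zetaFourIntegrand.comp continuous_neg)).aestronglyMeasurable.restrict
    ((ae_restrict_mem measurableSet_Ioi).mono fun x (hx : 0 < x) => ?_)
  have hq : 0 < exp (-x) := exp_pos _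
  have hlog : log (1 + exp (-x)) ≤ exp (-x) := by
    linarith [log_le_sub_one_of_pos (by positivity : 0 < 1 + exp (-x))]
  have hdiv : exp (-x) / (1 + exp (-x)) ≤ exp (-x) := div_le_self hq.le (by linarith)
  rw [norm_of_nonneg (add_nonneg (zetaFourIntegrand_nonneg _) (zetaFourIntegrand_nonneg _)),
    zetaFourIntegrand_add_neg]
  simp only [Pi.add_apply, one_mul]
  gcongr

theorem integrable_zetaFourIntegrand : Integrable zetaFourIntegrand :=
  integrable_of_nonneg_of_integrableOn_Ioi_add_comp_neg continuous_zetaFourIntegrand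
    zetaFourIntegrand_nonneg integrableOn_zetaFourIntegrand_add_neg

theorem hasSum_zetaFourIntegrand_add_neg {x : ℝ} (hx : 0 < x) :
    HasSum (fun n : ℕ => (-1) ^ n * ((x ^ 2 / (n + 1) + x ^ 3) * exp (-((n + 1) * x))))
      (zetaFourIntegrand x + zetaFourIntegrand (-x)) := by
  have hq : |exp (-x)| < 1 := by
    rw [abs_of_pos (exp_pos _), exp_lt_one_iff]
    linarith
  have h := ((hasSum_log_one_add_of_abs_lt_one hq).mul_left (x ^ 2)).add
    ((hasSum_div_one_add_of_abs_lt_one hq).mul_left (x ^ 3))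
  have e (n : ℕ) : x ^ 2 * ((-1) ^ n * exp (-x) ^ (n + 1) / (n + 1)) +
      x ^ 3 * ((-1) ^ n * exp (-x) ^ (n + 1)) =
      (-1) ^ n * ((x ^ 2 / (n + 1) + x ^ 3) * exp (-((n + 1) * x))) := by
    rw [← exp_nat_mul, Nat.cast_add_one]
    ring_nf
  rw [zetaFourIntegrand_add_neg]
  simpa only [e] using h

theorem hasSum_integral_zetaFourIntegrand_add_neg :
    HasSum (fun n : ℕ => (-1) ^ n * (8 / ((n : ℝ) + 1) ^ 4))
      (∫ x in Ioi 0, (zetaFourIntegrand x + zetaFourIntegrand (-x))) := by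
  set F : ℕ → ℝ → ℝ := fun n x =>
    (-1) ^ n * ((x ^ 2 / (n + 1) + x ^ 3) * exp (-((n + 1) * x)))
  have hc (n : ℕ) : (0 : ℝ) < n + 1 := by positivity
  have hint (n : ℕ) : IntegrableOn (F n) (Ioi 0) :=
    (integrableOn_sq_div_add_cube_mul_exp_neg_mul (hc n)).const_mul _
  have hnorm (n : ℕ) : ∫ x in Ioi 0, ‖F n x‖ = 8 / ((n : ℝ) + 1) ^ 4 := by
    rw [← integral_sq_div_add_cube_mul_exp_neg_mul (hc n)]
    refine setIntegral_congr_fun measurableSet_Ioi fun x (hx : 0 < x) => ?_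
    rw [norm_mul, norm_pow, norm_neg, norm_one, one_pow, one_mul, norm_of_nonneg]
    have := hc n
    positivity
  have h := hasSum_integral_of_summable_integral_norm hint
    (by simpa only [hnorm, mul_one_div] using (hasSum_one_div_succ_pow_four.mul_left 8).summable)
  rw [setIntegral_congr_fun measurableSet_Ioi
    fun x (hx : 0 < x) => (hasSum_zetaFourIntegrand_add_neg hx).tsum_eq] at h
  simpa only [F, integral_const_mul, integral_sq_div_add_cube_mul_exp_neg_mul (hc _)] using h

theorem zeta4_integral :
    ∫ z : ℝ, z ^ 2 * Real.log (1 + Real.exp z) / (1 + Real.exp z) =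
      7 * Real.pi ^ 4 / 90 := by
  have h := hasSum_neg_one_pow_div_succ_pow hasSum_one_div_succ_pow_four
  refine (integral_eq_integral_Ioi_add_comp_neg integrable_zetaFourIntegrand).trans
    (hasSum_integral_zetaFourIntegrand_add_neg.unique ?_)
  rw [show 7 * π ^ 4 / 90 = 8 * ((1 - 2 / 2 ^ 4) * (π ^ 4 / 90)) by ring]
  simpa only [mul_div_left_comm (8 : ℝ)] using h.mul_left 8
end

section
/- The improper integral of ln(1+e^z)/(1+e^z) over the whole real line equals ζ(2), i.e. ∫_{-∞}^{+∞} ln(1+eᶻ)/(1+eᶻ) dz = π²/6. -/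
/-!
The substitution `t = log (1 + exp z)` maps `ℝ` onto `(0, ∞)` with `dt = eᶻ / (1 + eᶻ) dz` and
`eᵗ - 1 = eᶻ`, turning the integral into the Bose integral `∫₀^∞ t / (eᵗ - 1) dt`. Expanding
`1 / (eᵗ - 1) = ∑ₙ e^{-(n+1)t}` and integrating term by term against Euler's integral for `Γ`
gives `∫₀^∞ t^{s-1} / (eᵗ - 1) dt = Γ(s) ∑ₙ (n+1)^{-s}`, which is `ζ(2) = π² / 6` at `s = 2`.
-/

open Real MeasureTheory Set

theorem hasSum_exp_neg_succ_mul {t : ℝ} (ht : 0 < t) :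
    HasSum (fun n : ℕ => exp (-((n + 1) * t))) (exp t - 1)⁻¹ := by
  have h := (hasSum_geometric_of_lt_one (exp_pos (-t)).le
    (exp_lt_one_iff.mpr (neg_neg_of_pos ht))).mul_left (exp (-t))
  have hsum : exp (-t) * (1 - exp (-t))⁻¹ = (exp t - 1)⁻¹ := by
    have : 1 < exp t := one_lt_exp_iff.mpr ht
    rw [exp_neg]
    field_simp
  rw [hsum] at h
  refine h.congr_fun fun n => ?_
  rw [← exp_nat_mul, ← exp_add]
  ring_nf

theorem integral_rpow_div_exp_sub_one {s : ℝ} (hs : 1 < s) :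
    ∫ t in Ioi (0 : ℝ), t ^ (s - 1) / (exp t - 1) =
      Gamma s * ∑' n : ℕ, 1 / ((n : ℝ) + 1) ^ s := by
  set F : ℕ → ℝ → ℝ := fun n t => t ^ (s - 1) * exp (-((n + 1) * t))
  have hF (n : ℕ) : ∫ t in Ioi 0, F n t = Gamma s * (1 / ((n : ℝ) + 1) ^ s) := by
    rw [integral_rpow_mul_exp_neg_mul_Ioi (by linarith) (by positivity),
      div_rpow zero_le_one (by positivity), one_rpow, mul_comm]
  have hF_int (n : ℕ) : IntegrableOn (F n) (Ioi 0) :=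
    .of_integral_ne_zero (by rw [hF n]; have := Gamma_pos_of_pos (by linarith : 0 < s); positivity)
  have hF_norm (n : ℕ) : ∫ t in Ioi 0, ‖F n t‖ = ∫ t in Ioi 0, F n t :=
    setIntegral_congr_fun measurableSet_Ioi fun t ht =>
      norm_of_nonneg (by have := ht.out; positivity)
  have hsum : Summable fun n : ℕ => 1 / ((n : ℝ) + 1) ^ s := by
    exact_mod_cast (summable_nat_add_iff 1).mpr (summable_one_div_nat_rpow.mpr hs)
  calc ∫ t in Ioi 0, t ^ (s - 1) / (exp t - 1)
      = ∫ t in Ioi 0, ∑' n, F n t := setIntegral_congr_fun measurableSet_Ioi fun t ht => by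
        rw [div_eq_mul_inv, ((hasSum_exp_neg_succ_mul ht).mul_left _).tsum_eq]
    _ = ∑' n, ∫ t in Ioi 0, F n t := (integral_tsum_of_summable_integral_norm hF_int
        (by simpa only [hF_norm, hF] using hsum.mul_left (Gamma s))).symm
    _ = Gamma s * ∑' n : ℕ, 1 / ((n : ℝ) + 1) ^ s := by simp_rw [hF, tsum_mul_left]

theorem hasDerivAt_log_one_add_exp (z : ℝ) :
    HasDerivAt (fun z => log (1 + exp z)) (exp z / (1 + exp z)) z :=
  ((hasDerivAt_exp z).const_add 1).log (by positivity)

theorem strictMono_log_one_add_exp : StrictMono fun z => log (1 + exp z) :=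
  fun _ _ hab => log_lt_log (by positivity) (by gcongr)

theorem range_log_one_add_exp : range (fun z => log (1 + exp z)) = Ioi 0 := by
  ext t
  refine ⟨?_, fun ht => ⟨log (exp t - 1), ?_⟩⟩
  · rintro ⟨z, rfl⟩
    exact log_pos (by simpa using exp_pos z)
  · simp only
    rw [exp_log (by simpa using ht), add_sub_cancel, log_exp]

theorem integral_smul_comp_log_one_add_exp {E : Type*} [NormedAddCommGroup E] [NormedSpace ℝ E]
    (g : ℝ → E) :
    ∫ z, (exp z / (1 + exp z)) • g (log (1 + exp z)) = ∫ t in Ioi 0, g t := by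
  have h := integral_image_eq_integral_abs_deriv_smul MeasurableSet.univ
    (fun z _ => (hasDerivAt_log_one_add_exp z).hasDerivWithinAt)
    strictMono_log_one_add_exp.injective.injOn g
  rw [image_univ, range_log_one_add_exp, setIntegral_univ] at h
  rw [h]
  congr 1 with z
  rw [abs_of_pos (by positivity)]

theorem zeta2_integral :
    ∫ z : ℝ, Real.log (1 + Real.exp z) / (1 + Real.exp z) =
      Real.pi ^ 2 / 6 := by
  have hzeta : ∑' n : ℕ, 1 / ((n : ℝ) + 1) ^ (2 : ℝ) = π ^ 2 / 6 := by
    simpa [rpow_two] using ((hasSum_nat_add_iff' 1).mpr hasSum_zeta_two).tsum_eq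
  have h := integral_smul_comp_log_one_add_exp fun t => t ^ ((2 : ℝ) - 1) / (exp t - 1)
  rw [integral_rpow_div_exp_sub_one one_lt_two, Gamma_two, hzeta, one_mul] at h
  rw [← h]
  congr 1 with z
  rw [smul_eq_mul, exp_log (by positivity)]
  norm_num
end
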